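/- arXiv:0710.0491 — 2 statements merged into one kernel-verified Lean document; each statement's English description precedes it below -/
import Mathlib

section
/- Let d ≥ 1, K > 0, and let u ∈ X_4^d(K). Then for each k ∈ {1,…,d} there exists a family of functions τ_k(·;h), for h ∈ (0,1], each defined and continuous on the set {x ∈ [0,1]^d : x ± h e_k ∈ [0,1]^d}, such that: (i) for every such x and h, ∂_k²u(x) − (u(x+h e_k) − 2u(x) + u(x−h e_k))/h² = h²·τ_k(x;h); and (ii) for every multi-index α ∈ {0,4}^d with α_k = 0 and every h, the derivative D^α τ_k(·;h) (taken in the coordinate directions other than k) exists and satisfies ‖D^α τ_k(·;h)‖_∞ ≤ K/12. Consequently, for any mesh sizes h_1,…,h_d, Σ_{k=1}^d ∂_k²u(x) − Σ_{k=1}^d (u(x+h_k e_k) − 2u(x) + u(x−h_k e_k))/h_k² = Σ_{k=1}^d h_k² τ_k(x;h_k) wherever all the difference quotients are defined. -/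
/-- Partial derivative of `u` in direction `i` (one-sided within `[0,1]` at the
boundary): `∂ᵢu(x) = d/dt u(x₁,…,t,…,x_d)|_{t = xᵢ}` taken within `[0,1]`. -/
noncomputable def pd (d : ℕ) (i : Fin d) (u : (Fin d → ℝ) → ℝ) : (Fin d → ℝ) → ℝ :=
  fun x => derivWithin (fun t => u (Function.update x i t)) (Set.Icc 0 1) (x i)

/-- Mixed partial derivative `D^α u = ∂₁^{α₁} ⋯ ∂_d^{α_d} u`. -/
noncomputable def mderiv (d : ℕ) (α : Fin d → ℕ) (u : (Fin d → ℝ) → ℝ) :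
    (Fin d → ℝ) → ℝ :=
  (List.finRange d).foldr (fun i v => (pd d i)^[α i] v) u

/-- The closed unit cube `[0,1]^d`. -/
def unitCube (d : ℕ) : Set (Fin d → ℝ) := Set.Icc 0 1

/-- The open unit cube `(0,1)^d`. -/
def openCube (d : ℕ) : Set (Fin d → ℝ) := Set.pi Set.univ fun _ => Set.Ioo (0 : ℝ) 1

/-- The boundary `∂[0,1]^d`. -/
def cubeBdry (d : ℕ) : Set (Fin d → ℝ) := {x ∈ unitCube d | ∃ i, x i = 0 ∨ x i = 1}

/-- All mixed partial derivatives `D^β f`, `β ≤ α`, exist on `s` (each step of the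
iterated differentiation is differentiable within `[0,1]` in its direction). -/
def HasDerivsOn (d : ℕ) (α : Fin d → ℕ) (f : (Fin d → ℝ) → ℝ)
    (s : Set (Fin d → ℝ)) : Prop :=
  ∀ β : Fin d → ℕ, (∀ i, β i ≤ α i) → ∀ i : Fin d, β i < α i → ∀ x ∈ s,
    DifferentiableWithinAt ℝ (fun t => mderiv d β f (Function.update x i t))
      (Set.Icc 0 1) (x i)

/-- `u ∈ X_k^d`: all mixed derivatives `D^α u`, `α ∈ {0,…,k}^d`, exist, are
continuous on `[0,1]^d` and vanish on the boundary. -/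
def MemX (d k : ℕ) (u : (Fin d → ℝ) → ℝ) : Prop :=
  HasDerivsOn d (fun _ => k) u (unitCube d) ∧
  ∀ α : Fin d → ℕ, (∀ i, α i ≤ k) →
    ContinuousOn (mderiv d α u) (unitCube d) ∧
    ∀ x ∈ cubeBdry d, mderiv d α u x = 0

/-- `u ∈ X_k^d(K)`: additionally all these derivatives are bounded by `K`. -/
def MemXb (d k : ℕ) (K : ℝ) (u : (Fin d → ℝ) → ℝ) : Prop :=
  MemX d k u ∧
  ∀ α : Fin d → ℕ, (∀ i, α i ≤ k) → ∀ x ∈ unitCube d, |mderiv d α u x| ≤ K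

/-- Mesh size `h_k = 2^{-lvl_k}` attached to a level vector. -/
noncomputable def hmesh (d : ℕ) (lvl : Fin d → ℕ) (k : Fin d) : ℝ := ((2 : ℝ) ^ lvl k)⁻¹

/-- The grid point with index `i` on the grid of level `lvl`. -/
noncomputable def gridpt (d : ℕ) (lvl : Fin d → ℕ) (i : Fin d → ℕ) : Fin d → ℝ :=
  fun k => (i k : ℝ) * hmesh d lvl k

/-- Valid grid indices: `0 ≤ i_k ≤ 2^{lvl_k}`. -/
def IsGridIdx (d : ℕ) (lvl : Fin d → ℕ) (i : Fin d → ℕ) : Prop := ∀ k, i k ≤ 2 ^ lvl k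

/-- The hyperplane set `I^{(J)} = {x ∈ [0,1]^d : x_j/h_j ∈ ℤ for j ∈ J}`. -/
def Iplane (d : ℕ) (J : Finset (Fin d)) (lvl : Fin d → ℕ) : Set (Fin d → ℝ) :=
  {x ∈ unitCube d | ∀ j ∈ J, ∃ m : ℤ, x j = (m : ℝ) * hmesh d lvl j}

/-- `U` is the central finite difference solution of the Poisson problem `Δu = f`
with zero Dirichlet data on the grid of level `lvl`. -/
def IsFDPoisson (d : ℕ) (lvl : Fin d → ℕ) (f : (Fin d → ℝ) → ℝ)
    (U : (Fin d → ℕ) → ℝ) : Prop :=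
  (∀ i : Fin d → ℕ, IsGridIdx d lvl i → (∃ k, i k = 0 ∨ i k = 2 ^ lvl k) → U i = 0) ∧
  (∀ i : Fin d → ℕ, (∀ k, 1 ≤ i k ∧ i k < 2 ^ lvl k) →
    ∑ k, (U (Function.update i k (i k + 1)) - 2 * U i + U (Function.update i k (i k - 1)))
        / hmesh d lvl k ^ 2
      = f (gridpt d lvl i))

/-- `U` is the upwind (implicit Euler) solution of the advection equation
`Σᵢ ∂ᵢu = 0` on the grid of level `lvl`, with inflow data given by `u`. -/
def IsUpwindSol (d : ℕ) (lvl : Fin d → ℕ) (u : (Fin d → ℝ) → ℝ)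
    (U : (Fin d → ℕ) → ℝ) : Prop :=
  (∀ i : Fin d → ℕ, IsGridIdx d lvl i → (∃ k, i k = 0) → U i = u (gridpt d lvl i)) ∧
  (∀ i : Fin d → ℕ, IsGridIdx d lvl i → (∀ k, 1 ≤ i k) →
    ∑ k, (U i - U (Function.update i k (i k - 1))) / hmesh d lvl k = 0)

/-- `g` is the multilinear interpolant of the grid function `U` on the grid of
level `lvl`: it agrees with `U` at all grid points and is a polynomial of degree
at most `1` in each variable on each grid cell. -/
def IsInterp (d : ℕ) (lvl : Fin d → ℕ) (U : (Fin d → ℕ) → ℝ)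
    (g : (Fin d → ℝ) → ℝ) : Prop :=
  (∀ i : Fin d → ℕ, IsGridIdx d lvl i → g (gridpt d lvl i) = U i) ∧
  (∀ j : Fin d → ℕ, (∀ k, j k < 2 ^ lvl k) →
    ∃ c : Finset (Fin d) → ℝ, ∀ x : Fin d → ℝ,
      (∀ k, (j k : ℝ) * hmesh d lvl k ≤ x k ∧ x k ≤ ((j k : ℝ) + 1) * hmesh d lvl k) →
      g x = ∑ T : Finset (Fin d), c T * ∏ k ∈ T, x k)

/-- The domain `{x : x ± h e_k ∈ [0,1]^d}` of the truncation error terms. -/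
def diffDom (d : ℕ) (k : Fin d) (h : ℝ) : Set (Fin d → ℝ) :=
  {x | Function.update x k (x k + h) ∈ unitCube d ∧
       Function.update x k (x k - h) ∈ unitCube d}

/-!
Put `τₖ(·; h) = (∂ₖ²u - δₖ²u / h²) / h²`, where `δₖ²` is the central second difference; then (i)
holds by construction. Derivatives in directions `i ≠ k` commute with the shifts `x ↦ x ± h eₖ`,
so for `αₖ = 0` the derivative `D^α τₖ` is the same expression built from `D^α u`, provided
`D^α ∂ₖ²u = D^{α+2eₖ}u`. This reordering of mixed partials on the closed cube is Schwarz's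
theorem, proved with the fundamental theorem of calculus and Fubini. The bound `K/12` is the
Taylor estimate `|φ(c+h) - 2φ(c) + φ(c-h) - h²φ''(c)| ≤ h⁴ sup|φ''''| / 12` for
`φ(t) = D^α u(x + (t - xₖ) eₖ)`, obtained from the even part `φ(c+t) + φ(c-t)`.
-/

open Set Function

section MultiIndex

variable {d : ℕ}

lemma mderiv_zero (f : (Fin d → ℝ) → ℝ) : mderiv d 0 f = f := by
  simp [mderiv]

lemma foldr_iterate_pd_add_single {α : Fin d → ℕ} {i : Fin d} (hα : ∀ j < i, α j = 0)
    (f : (Fin d → ℝ) → ℝ) {l : List (Fin d)} (hl : l.Pairwise (· < ·)) (hi : i ∈ l) :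
    l.foldr (fun j v => (pd d j)^[(α + Pi.single i 1 : Fin d → ℕ) j] v) f
      = pd d i (l.foldr (fun j v => (pd d j)^[α j] v) f) := by
  induction l with
  | nil => simp at hi
  | cons j l ih =>
    rw [List.pairwise_cons] at hl
    rcases eq_or_ne j i with rfl | hji
    · have hl_ne : ∀ a ∈ l, a ≠ j := fun a ha => (hl.1 a ha).ne'
      rw [List.foldr_cons, List.foldr_cons, List.foldr_ext _ _ _ fun a ha v => by
        rw [Pi.add_apply, Pi.single_eq_of_ne (hl_ne a ha), add_zero]]
      simp only [Pi.add_apply, Pi.single_eq_same, iterate_succ_apply']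
    · have hil : i ∈ l := (List.mem_cons.1 hi).resolve_left hji.symm
      have hαj : α j = 0 := hα j (hl.1 i hil)
      simp only [List.foldr_cons, Pi.add_apply, Pi.single_eq_of_ne hji, hαj, add_zero,
        iterate_zero, id_eq]
      exact ih hl.2 hil

lemma mderiv_add_single {α : Fin d → ℕ} {i : Fin d} (hα : ∀ j < i, α j = 0)
    (f : (Fin d → ℝ) → ℝ) : mderiv d (α + Pi.single i 1) f = pd d i (mderiv d α f) :=
  foldr_iterate_pd_add_single hα f (List.pairwise_lt_finRange d) (List.mem_finRange i)

lemma mderiv_single_two (k : Fin d) (f : (Fin d → ℝ) → ℝ) :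
    mderiv d (Pi.single k 2) f = pd d k (pd d k f) := by
  have h2 : (Pi.single k 2 : Fin d → ℕ) = (0 + Pi.single k 1) + Pi.single k 1 := by
    rw [zero_add, ← Pi.single_add]
  rw [h2, mderiv_add_single, mderiv_add_single (α := 0) (fun _ _ => rfl), mderiv_zero]
  intro j hj
  simp [Pi.single_eq_of_ne hj.ne]

lemma exists_eq_add_single_of_ne_zero {α : Fin d → ℕ} {j : Fin d} (hj : α j ≠ 0) :
    ∃ j₀ ≤ j, ∃ β : Fin d → ℕ, α = β + Pi.single j₀ 1 ∧ ∀ i < j₀, β i = 0 := by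
  obtain ⟨j₀, hj₀, hmin⟩ := wellFounded_lt.has_min {i | α i ≠ 0} ⟨j, hj⟩
  refine ⟨j₀, not_lt.1 (hmin j hj), α - Pi.single j₀ 1, ?_, fun i hi => ?_⟩
  · ext i
    rcases eq_or_ne i j₀ with rfl | hi
    · simp only [Pi.add_apply, Pi.sub_apply, Pi.single_eq_same]
      exact (Nat.sub_add_cancel (Nat.one_le_iff_ne_zero.2 hj₀)).symm
    · simp [Pi.single_eq_of_ne hi]
  · simpa [Pi.single_eq_of_ne hi.ne] using fun h => hmin i h hi

lemma sum_add_single_one (β : Fin d → ℕ) (j : Fin d) :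
    ∑ i, (β + Pi.single j 1 : Fin d → ℕ) i = ∑ i, β i + 1 := by
  simp [Finset.sum_add_distrib]

end MultiIndex

section Calculus

lemma ContinuousOn.exists_continuous_eqOn {X : Type*} [TopologicalSpace X] [NormalSpace X]
    {s : Set X} (hs : IsClosed s) {f : X → ℝ} (hf : ContinuousOn f s) :
    ∃ g : X → ℝ, Continuous g ∧ EqOn g f s := by
  obtain ⟨g, hg⟩ := ContinuousMap.exists_restrict_eq hs ⟨s.domRestrict f, hf.domRestrict⟩
  exact ⟨g, g.continuous, fun x hx => DFunLike.congr_fun hg ⟨x, hx⟩⟩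

lemma integral_eq_sub_of_hasDerivWithinAt_of_subset {f f' : ℝ → ℝ} {s : Set ℝ} {a b : ℝ}
    (hab : a ≤ b) (hs : Icc a b ⊆ s) (hf : ∀ x ∈ Icc a b, HasDerivWithinAt f (f' x) s x)
    (hf' : ContinuousOn f' (Icc a b)) : ∫ x in a..b, f' x = f b - f a :=
  intervalIntegral.integral_eq_sub_of_hasDerivAt_of_le hab
    (fun x hx => (hf x hx).continuousWithinAt.mono hs)
    (fun x hx => (hf x (Ioo_subset_Icc_self hx)).hasDerivAt
      (Filter.mem_of_superset (Icc_mem_nhds hx.1 hx.2) hs))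
    (hf'.intervalIntegrable_of_Icc hab)

lemma eq_add_integral_add_integral_integral {g g₁ G : ℝ → ℝ → ℝ}
    (hg₁ : ∀ s ∈ Icc (0:ℝ) 1, ∀ t ∈ Icc (0:ℝ) 1, HasDerivWithinAt (g · t) (g₁ s t) (Icc 0 1) s)
    (hg₁c : ∀ t ∈ Icc (0:ℝ) 1, ContinuousOn (g₁ · t) (Icc 0 1))
    (hG : ∀ s ∈ Icc (0:ℝ) 1, ∀ t ∈ Icc (0:ℝ) 1, HasDerivWithinAt (g₁ s) (G s t) (Icc 0 1) t)
    (hGc : Continuous (uncurry G)) {s t : ℝ} (hs : s ∈ Icc (0:ℝ) 1) (ht : t ∈ Icc (0:ℝ) 1) :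
    g s t = g 0 t + (∫ σ in (0:ℝ)..s, g₁ σ 0) + ∫ τ in (0:ℝ)..t, ∫ σ in (0:ℝ)..s, G σ τ := by
  have hsub : ∀ {r : ℝ}, r ∈ Icc (0:ℝ) 1 → Icc 0 r ⊆ Icc 0 1 := fun hr =>
    Icc_subset_Icc_right hr.2
  have hg₁_eq : ∀ σ ∈ Icc (0:ℝ) s, g₁ σ t = g₁ σ 0 + ∫ τ in (0:ℝ)..t, G σ τ := by
    intro σ hσ
    rw [integral_eq_sub_of_hasDerivWithinAt_of_subset ht.1 (hsub ht)
      (fun τ hτ => hG σ (hsub hs hσ) τ (hsub ht hτ))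
      (hGc.comp (Continuous.prodMk_right σ)).continuousOn]
    ring
  have hinner : Continuous fun σ => ∫ τ in (0:ℝ)..t, G σ τ :=
    intervalIntegral.continuous_parametric_intervalIntegral_of_continuous' hGc 0 t
  have hswap : ∫ σ in (0:ℝ)..s, ∫ τ in (0:ℝ)..t, G σ τ
      = ∫ τ in (0:ℝ)..t, ∫ σ in (0:ℝ)..s, G σ τ :=
    MeasureTheory.intervalIntegral_intervalIntegral_swap
      ((hGc.continuousOn.integrableOn_compact (isCompact_uIcc.prod isCompact_uIcc)).mono_set
        (prod_mono uIoc_subset_uIcc uIoc_subset_uIcc))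
  calc g s t = g 0 t + ∫ σ in (0:ℝ)..s, g₁ σ t := by
        rw [integral_eq_sub_of_hasDerivWithinAt_of_subset hs.1 (hsub hs)
          (fun σ hσ => hg₁ σ (hsub hs hσ) t ht) ((hg₁c t ht).mono (hsub hs))]
        ring
    _ = g 0 t + ∫ σ in (0:ℝ)..s, (g₁ σ 0 + ∫ τ in (0:ℝ)..t, G σ τ) := by
        rw [intervalIntegral.integral_congr fun σ hσ => hg₁_eq σ (by rwa [uIcc_of_le hs.1] at hσ)]
    _ = _ := by
        rw [intervalIntegral.integral_add
          (((hg₁c 0 ⟨le_rfl, zero_le_one⟩).mono (hsub hs)).intervalIntegrable_of_Icc hs.1)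
          (hinner.intervalIntegrable 0 s), hswap, add_assoc]

theorem hasDerivWithinAt_derivWithin_of_mixed {g g₁ g₁₂ : ℝ → ℝ → ℝ}
    (hg₀ : ∀ t ∈ Icc (0:ℝ) 1, DifferentiableWithinAt ℝ (g 0) (Icc 0 1) t)
    (hg₁ : ∀ s ∈ Icc (0:ℝ) 1, ∀ t ∈ Icc (0:ℝ) 1, HasDerivWithinAt (g · t) (g₁ s t) (Icc 0 1) s)
    (hg₁c : ∀ t ∈ Icc (0:ℝ) 1, ContinuousOn (g₁ · t) (Icc 0 1))
    (hg₁₂ : ∀ s ∈ Icc (0:ℝ) 1, ∀ t ∈ Icc (0:ℝ) 1, HasDerivWithinAt (g₁ s) (g₁₂ s t) (Icc 0 1) t)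
    (hg₁₂c : ContinuousOn (uncurry g₁₂) (Icc 0 1 ×ˢ Icc 0 1))
    {s t : ℝ} (hs : s ∈ Icc (0:ℝ) 1) (ht : t ∈ Icc (0:ℝ) 1) :
    HasDerivWithinAt (fun s => derivWithin (g s) (Icc 0 1) t) (g₁₂ s t) (Icc 0 1) s := by
  -- extending `g₁₂` continuously to `ℝ²` makes the parametric integrals below continuous
  obtain ⟨G, hGc, hG⟩ := hg₁₂c.exists_continuous_eqOn (isClosed_Icc.prod isClosed_Icc)
  have hG' : ∀ s ∈ Icc (0:ℝ) 1, ∀ t ∈ Icc (0:ℝ) 1, G (s, t) = g₁₂ s t :=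
    fun s hs t ht => hG ⟨hs, ht⟩
  have hderiv : ∀ s ∈ Icc (0:ℝ) 1, derivWithin (g s) (Icc 0 1) t
      = derivWithin (g 0) (Icc 0 1) t + ∫ σ in (0:ℝ)..s, G (σ, t) := by
    intro s hs
    have hΦ : Continuous fun τ => ∫ σ in (0:ℝ)..s, G (σ, τ) :=
      intervalIntegral.continuous_parametric_intervalIntegral_of_continuous'
        (f := fun τ σ => G (σ, τ)) (hGc.comp continuous_swap) 0 s
    have hsum := (hg₀ t ht).hasDerivWithinAt.add
      (((hΦ.integral_hasStrictDerivAt 0 t).hasDerivAt.const_add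
        (∫ σ in (0:ℝ)..s, g₁ σ 0)).hasDerivWithinAt (s := Icc 0 1))
    refine (hsum.congr_of_mem (fun τ hτ => ?_) ht).derivWithin
      (uniqueDiffOn_Icc zero_lt_one t ht)
    rw [eq_add_integral_add_integral_integral (G := fun σ τ => G (σ, τ)) hg₁ hg₁c
      (fun s hs t ht => hG' s hs t ht ▸ hg₁₂ s hs t ht) hGc hs hτ, add_assoc]
    rfl
  have hprim : HasDerivAt (fun s => derivWithin (g 0) (Icc 0 1) t + ∫ σ in (0:ℝ)..s, G (σ, t))
      (G (s, t)) s :=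
    ((hGc.comp (continuous_id.prodMk continuous_const)).integral_hasStrictDerivAt 0 s).hasDerivAt
      |>.const_add _
  rw [← hG' s hs t ht]
  exact hprim.hasDerivWithinAt.congr_of_mem hderiv hs

end Calculus

section Cube

variable {d : ℕ}

lemma mem_unitCube_iff {x : Fin d → ℝ} : x ∈ unitCube d ↔ ∀ i, x i ∈ Icc (0:ℝ) 1 :=
  ⟨fun hx i => ⟨hx.1 i, hx.2 i⟩, fun hx => ⟨fun i => (hx i).1, fun i => (hx i).2⟩⟩

lemma update_mem_unitCube {x : Fin d → ℝ} (hx : x ∈ unitCube d) (i : Fin d) {t : ℝ}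
    (ht : t ∈ Icc (0:ℝ) 1) : update x i t ∈ unitCube d := by
  rw [mem_unitCube_iff] at hx ⊢
  intro j
  rcases eq_or_ne j i with rfl | hj
  · simpa using ht
  · simpa [hj] using hx j

theorem hasDerivWithinAt_pd_of_mixed {i j : Fin d} (hij : i ≠ j) {f f₁ f₁₂ : (Fin d → ℝ) → ℝ}
    (hf : ∀ x ∈ unitCube d,
      DifferentiableWithinAt ℝ (fun t => f (update x j t)) (Icc 0 1) (x j))
    (hf₁ : ∀ x ∈ unitCube d,
      HasDerivWithinAt (fun t => f (update x i t)) (f₁ x) (Icc 0 1) (x i))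
    (hf₁c : ContinuousOn f₁ (unitCube d))
    (hf₁₂ : ∀ x ∈ unitCube d,
      HasDerivWithinAt (fun t => f₁ (update x j t)) (f₁₂ x) (Icc 0 1) (x j))
    (hf₁₂c : ContinuousOn f₁₂ (unitCube d)) {x : Fin d → ℝ} (hx : x ∈ unitCube d) :
    HasDerivWithinAt (fun t => pd d j f (update x i t)) (f₁₂ x) (Icc 0 1) (x i) := by
  set z : ℝ → ℝ → Fin d → ℝ := fun s t => update (update x i s) j t
  have hz : ∀ s ∈ Icc (0:ℝ) 1, ∀ t ∈ Icc (0:ℝ) 1, z s t ∈ unitCube d := fun s hs t ht =>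
    update_mem_unitCube (update_mem_unitCube hx i hs) j ht
  have hzc : Continuous (uncurry z) :=
    ((continuous_const (y := x)).update i continuous_fst).update j continuous_snd
  have hz_i : ∀ s t, z s t i = s := fun s t => by simp [z, hij]
  have hz_j : ∀ s t, z s t j = t := fun s t => by simp [z]
  have hz_upd_i : ∀ s t σ, update (z s t) i σ = z σ t := fun s t σ => by
    simp only [z]; rw [update_comm hij.symm, update_idem]
  have hz_upd_j : ∀ s t τ, update (z s t) j τ = z s τ := fun s t τ => by simp [z]
  have hzx : z (x i) (x j) = x := by simp [z]
  have hpd : ∀ s, pd d j f (update x i s) = derivWithin (fun t => f (z s t)) (Icc 0 1) (x j) :=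
    fun s => by simp only [pd, update_of_ne hij.symm]; rfl
  have hschwarz := hasDerivWithinAt_derivWithin_of_mixed
    (g := fun s t => f (z s t)) (g₁ := fun s t => f₁ (z s t)) (g₁₂ := fun s t => f₁₂ (z s t))
    (fun t ht => by simpa [hz_upd_j, hz_j] using hf (z 0 t) (hz 0 ⟨le_rfl, zero_le_one⟩ t ht))
    (fun s hs t ht => by simpa [hz_upd_i, hz_i] using hf₁ (z s t) (hz s hs t ht))
    (fun t ht => hf₁c.comp (hzc.comp (continuous_id.prodMk continuous_const)).continuousOn
      fun s hs => hz s hs t ht)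
    (fun s hs t ht => by simpa [hz_upd_j, hz_j] using hf₁₂ (z s t) (hz s hs t ht))
    (hf₁₂c.comp hzc.continuousOn fun p hp => hz p.1 hp.1 p.2 hp.2)
    ((mem_unitCube_iff.1 hx) i) ((mem_unitCube_iff.1 hx) j)
  simp only [hzx] at hschwarz
  simpa only [hpd] using hschwarz

end Cube

def MixedContDiff (d n : ℕ) (u : (Fin d → ℝ) → ℝ) : Prop :=
  HasDerivsOn d (fun _ => n) u (unitCube d) ∧
    ∀ α : Fin d → ℕ, (∀ i, α i ≤ n) → ContinuousOn (mderiv d α u) (unitCube d)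

namespace MixedContDiff

variable {d n : ℕ} {u : (Fin d → ℝ) → ℝ}

lemma of_memX (hu : MemX d n u) : MixedContDiff d n u :=
  ⟨hu.1, fun α hα => (hu.2 α hα).1⟩

theorem hasDerivWithinAt_mderiv (hu : MixedContDiff d n u) {α : Fin d → ℕ}
    (hα : ∀ j, α j ≤ n) {i : Fin d} (hi : α i < n) {x : Fin d → ℝ} (hx : x ∈ unitCube d) :
    HasDerivWithinAt (fun t => mderiv d α u (update x i t))
      (mderiv d (α + Pi.single i 1) u x) (Icc 0 1) (x i) := by
  induction hN : ∑ j, α j using Nat.strong_induction_on generalizing α x with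
  | _ N ih =>
  by_cases hlow : ∀ j < i, α j = 0
  · rw [mderiv_add_single hlow]
    exact (hu.1 α hα i hi x hx).hasDerivWithinAt
  push Not at hlow
  obtain ⟨j, hji, hj⟩ := hlow
  -- `D^α = ∂_{j₀} D^β` for the lowest direction `j₀ < i` of `α`; by the induction hypothesis
  -- `∂ᵢ D^β = D^{β+eᵢ}`, and Schwarz moves `∂ᵢ` past `∂_{j₀}`
  obtain ⟨j₀, hj₀j, β, rfl, hβ⟩ := exists_eq_add_single_of_ne_zero hj
  have hj₀i : j₀ ≠ i := (hj₀j.trans_lt hji).ne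
  have hαl : ∀ l, β l + (Pi.single j₀ 1 : Fin d → ℕ) l ≤ n := hα
  have hβn : ∀ l, β l ≤ n := fun l => (Nat.le_add_right _ _).trans (hαl l)
  have hβj₀ : β j₀ < n := by simpa using hαl j₀
  have hβi : β i < n := by simpa [hj₀i.symm] using hi
  have hβin : ∀ l, (β + Pi.single i 1 : Fin d → ℕ) l ≤ n := fun l => by
    rcases eq_or_ne l i with rfl | hl
    · simpa using hβi
    · simpa [hl] using hβn l
  have hαin : ∀ l, (β + Pi.single j₀ 1 + Pi.single i 1 : Fin d → ℕ) l ≤ n := fun l => by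
    rcases eq_or_ne l i with rfl | hl
    · simpa using hi
    · simpa [hl] using hαl l
  have hlow' : ∀ l < j₀, (β + Pi.single i 1 : Fin d → ℕ) l = 0 := fun l hl => by
    simp [hβ l hl, (hl.trans (hj₀j.trans_lt hji)).ne]
  rw [mderiv_add_single hβ, add_right_comm]
  refine hasDerivWithinAt_pd_of_mixed hj₀i.symm
    (fun y hy => hu.1 β hβn j₀ hβj₀ y hy)
    (fun y hy => ih _ ?_ hβn hβi hy rfl) (hu.2 _ hβin)
    (fun y hy => ?_) (hu.2 _ (by rwa [add_right_comm] at hαin)) hx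
  · rw [← hN, sum_add_single_one]
    exact Nat.lt_succ_self _
  · rw [mderiv_add_single hlow']
    exact (hu.1 _ hβin j₀ (by simpa [hj₀i] using hβj₀) y hy).hasDerivWithinAt

end MixedContDiff

section MixedDerivativeFamily

variable {d : ℕ}

lemma pd_congr {f g : (Fin d → ℝ) → ℝ} {i : Fin d} {x : Fin d → ℝ} (hx : x i ∈ Icc (0:ℝ) 1)
    (hfg : ∀ t ∈ Icc (0:ℝ) 1, f (update x i t) = g (update x i t)) :
    pd d i f x = pd d i g x :=
  derivWithin_congr hfg (hfg _ hx)

theorem eqOn_mderiv_of_hasDerivWithinAt {f : (Fin d → ℝ) → ℝ}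
    {F : (Fin d → ℕ) → (Fin d → ℝ) → ℝ} {α : Fin d → ℕ} {s : Set (Fin d → ℝ)}
    (hs : s ⊆ unitCube d) (hupd : ∀ i, α i ≠ 0 → ∀ x ∈ s, ∀ t ∈ Icc (0:ℝ) 1, update x i t ∈ s)
    (hF₀ : EqOn f (F 0) s)
    (hF : ∀ β : Fin d → ℕ, (∀ j, β j ≤ α j) → ∀ i, β i < α i → ∀ x ∈ s,
      HasDerivWithinAt (fun t => F β (update x i t)) (F (β + Pi.single i 1) x) (Icc 0 1) (x i))
    {β : Fin d → ℕ} (hβ : ∀ j, β j ≤ α j) : EqOn (mderiv d β f) (F β) s := by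
  induction hN : ∑ j, β j using Nat.strong_induction_on generalizing β with
  | _ N ih =>
  by_cases h₀ : β = 0
  · rwa [h₀, mderiv_zero]
  obtain ⟨j, hj⟩ := Function.ne_iff.1 h₀
  obtain ⟨j₀, -, γ, rfl, hγ⟩ := exists_eq_add_single_of_ne_zero hj
  have hγα : ∀ l, γ l ≤ α l := fun l => (Nat.le_add_right _ _).trans (hβ l)
  have hγj₀ : γ j₀ < α j₀ := by simpa using hβ j₀
  have hIH : EqOn (mderiv d γ f) (F γ) s :=
    ih _ (by rw [← hN, sum_add_single_one]; exact Nat.lt_succ_self _) hγα rfl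
  intro x hx
  have hxj₀ : x j₀ ∈ Icc (0:ℝ) 1 := mem_unitCube_iff.1 (hs hx) j₀
  rw [mderiv_add_single hγ, pd_congr hxj₀ fun t ht => hIH (hupd j₀ (by omega) x hx t ht)]
  exact (hF γ hγα j₀ hγj₀ x hx).derivWithin (uniqueDiffOn_Icc zero_lt_one _ hxj₀)

theorem hasDerivsOn_of_hasDerivWithinAt {f : (Fin d → ℝ) → ℝ}
    {F : (Fin d → ℕ) → (Fin d → ℝ) → ℝ} {α : Fin d → ℕ} {s : Set (Fin d → ℝ)}
    (hupd : ∀ i, α i ≠ 0 → ∀ x ∈ s, ∀ t ∈ Icc (0:ℝ) 1, update x i t ∈ s)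
    (hF : ∀ β : Fin d → ℕ, (∀ j, β j ≤ α j) → ∀ i, β i < α i → ∀ x ∈ s,
      HasDerivWithinAt (fun t => F β (update x i t)) (F (β + Pi.single i 1) x) (Icc 0 1) (x i))
    (hmderiv : ∀ β : Fin d → ℕ, (∀ j, β j ≤ α j) → EqOn (mderiv d β f) (F β) s) :
    HasDerivsOn d α f s := by
  intro β hβ i hi x hx
  have hxi : ∀ t ∈ Icc (0:ℝ) 1, update x i t ∈ s := hupd i (by omega) x hx
  exact (hF β hβ i hi x hx).differentiableWithinAt.congr
    (fun t ht => hmderiv β hβ (hxi t ht)) (by rw [update_eq_self]; exact hmderiv β hβ hx)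

end MixedDerivativeFamily

section Taylor

open Nat in
lemma hasDerivAt_mul_pow_succ_div_factorial (c : ℝ) (m : ℕ) (t : ℝ) :
    HasDerivAt (fun t => c * t ^ (m + 1) / (m + 1)!) (c * t ^ m / m !) t := by
  refine (((hasDerivAt_pow (m + 1) t).const_mul c).div_const ((m + 1)! : ℝ)).congr_deriv ?_
  rw [Nat.factorial_succ]
  push_cast
  field_simp

open Nat in
theorem abs_sub_taylor_sum_le {ψ : ℕ → ℝ → ℝ} {n : ℕ} {b M : ℝ}
    (hψ : ∀ m < n, ∀ t ∈ Icc 0 b, HasDerivWithinAt (ψ m) (ψ (m + 1) t) (Icc 0 b) t)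
    (hM : ∀ t ∈ Icc 0 b, |ψ n t| ≤ M) {t : ℝ} (ht : t ∈ Icc 0 b) :
    |ψ 0 t - ∑ m ∈ Finset.range n, ψ m 0 * t ^ m / m !| ≤ M * t ^ n / n ! := by
  induction n generalizing ψ t with
  | zero => simpa using hM t ht
  | succ n ih =>
    have hpoly : ∀ t, HasDerivAt
        (fun t => ∑ m ∈ Finset.range n, ψ (m + 1) 0 * t ^ (m + 1) / (m + 1)!)
        (∑ m ∈ Finset.range n, ψ (m + 1) 0 * t ^ m / m !) t := fun t =>
      HasDerivAt.fun_sum fun m _ => hasDerivAt_mul_pow_succ_div_factorial _ m t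
    have hψ₀ : ∀ t ∈ Icc 0 b, HasDerivWithinAt (ψ 0) (ψ 1 t) (Icc 0 b) t :=
      hψ 0 n.succ_pos
    rw [Finset.sum_range_succ']
    simp only [pow_zero, factorial_zero, cast_one, div_one, mul_one]
    refine image_norm_le_of_norm_deriv_right_le_deriv_boundary
      (f' := fun t => ψ 1 t - ∑ m ∈ Finset.range n, ψ (m + 1) 0 * t ^ m / m !)
      (fun s hs => ((hψ₀ s hs).continuousWithinAt.sub
        ((hpoly s).continuousAt.continuousWithinAt.add continuousWithinAt_const)))
      (fun s hs => ?_) (by simp) (hasDerivAt_mul_pow_succ_div_factorial M n)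
      (fun s hs => ?_) ht
    · exact ((hψ₀ s (Ico_subset_Icc_self hs)).sub ((hpoly s).add_const _).hasDerivWithinAt)
        |>.mono_of_mem_nhdsWithin (Filter.mem_of_superset (Icc_mem_nhdsGE hs.2)
          (Icc_subset_Icc_left hs.1))
    · exact ih (ψ := fun m => ψ (m + 1)) (fun m hm => hψ (m + 1) (by omega)) hM
        (Ico_subset_Icc_self hs)

theorem abs_central_difference_sub_le {φ : ℕ → ℝ → ℝ} {c h M : ℝ} (hh : 0 ≤ h)
    (hφ : ∀ m < 4, ∀ t ∈ Icc (c - h) (c + h),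
      HasDerivWithinAt (φ m) (φ (m + 1) t) (Icc (c - h) (c + h)) t)
    (hM : ∀ t ∈ Icc (c - h) (c + h), |φ 4 t| ≤ M) :
    |φ 0 (c + h) - 2 * φ 0 c + φ 0 (c - h) - h ^ 2 * φ 2 c| ≤ M * h ^ 4 / 12 := by
  have hmem : ∀ t ∈ Icc 0 h, c + t ∈ Icc (c - h) (c + h) ∧ c - t ∈ Icc (c - h) (c + h) :=
    fun t ht => ⟨⟨by linarith [ht.1], by linarith [ht.2]⟩, ⟨by linarith [ht.2], by linarith [ht.1]⟩⟩
  -- `ψ m` is the `m`-th derivative of `t ↦ φ (c + t) + φ (c - t)`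
  set ψ : ℕ → ℝ → ℝ := fun m t => φ m (c + t) + (-1) ^ m * φ m (c - t)
  have hψ : ∀ m < 4, ∀ t ∈ Icc 0 h, HasDerivWithinAt (ψ m) (ψ (m + 1) t) (Icc 0 h) t := by
    intro m hm t ht
    have hplus := (hφ m hm _ (hmem t ht).1).comp t ((hasDerivAt_id t).const_add c).hasDerivWithinAt
      fun s hs => (hmem s hs).1
    have hminus := (hφ m hm _ (hmem t ht).2).comp t ((hasDerivAt_id t).const_sub c).hasDerivWithinAt
      fun s hs => (hmem s hs).2
    refine (hplus.add (hminus.const_mul ((-1) ^ m))).congr_deriv ?_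
    simp only [ψ, pow_succ]
    ring
  have hψ₄ : ∀ t ∈ Icc 0 h, |ψ 4 t| ≤ 2 * M := fun t ht => by
    have := abs_add_le (φ 4 (c + t)) (φ 4 (c - t))
    simp only [ψ]
    norm_num
    linarith [hM _ (hmem t ht).1, hM _ (hmem t ht).2]
  have := abs_sub_taylor_sum_le hψ hψ₄ (right_mem_Icc.2 hh)
  simp only [ψ, Finset.sum_range_succ, Finset.sum_range_zero] at this
  norm_num [Nat.factorial] at this
  rw [show M * h ^ 4 / 12 = 2 * M * h ^ 4 / 24 by ring]
  convert this using 2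
  ring

end Taylor

section Stencil

variable {d : ℕ}

def centralDiff (d : ℕ) (k : Fin d) (h : ℝ) (f : (Fin d → ℝ) → ℝ) (x : Fin d → ℝ) : ℝ :=
  f (update x k (x k + h)) - 2 * f x + f (update x k (x k - h))

/-- With `w = ∂ₖ²u`, `v = u` this is `τₖ(·; h)`; with `w = D^{β+2eₖ}u`, `v = D^β u` it is
`D^β τₖ(·; h)` for `βₖ = 0`. -/
noncomputable def stencilRemainder (d : ℕ) (k : Fin d) (h : ℝ) (w v : (Fin d → ℝ) → ℝ)
    (x : Fin d → ℝ) : ℝ :=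
  (w x - centralDiff d k h v x / h ^ 2) / h ^ 2

lemma sq_mul_stencilRemainder {k : Fin d} {h : ℝ} (hh : h ≠ 0) (w v : (Fin d → ℝ) → ℝ)
    (x : Fin d → ℝ) :
    h ^ 2 * stencilRemainder d k h w v x = w x - centralDiff d k h v x / h ^ 2 := by
  unfold stencilRemainder
  field_simp

lemma diffDom_subset_unitCube {k : Fin d} {h : ℝ} (hh : 0 ≤ h) : diffDom d k h ⊆ unitCube d := by
  intro x hx
  have hplus := mem_unitCube_iff.1 hx.1
  have hminus := mem_unitCube_iff.1 hx.2
  refine mem_unitCube_iff.2 fun i => ?_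
  rcases eq_or_ne i k with rfl | hik
  · have := hplus i
    have := hminus i
    simp only [update_self, mem_Icc] at *
    constructor <;> linarith
  · simpa [hik] using hplus i

lemma Icc_sub_add_subset_of_mem_diffDom {k : Fin d} {h : ℝ} {x : Fin d → ℝ}
    (hx : x ∈ diffDom d k h) : Icc (x k - h) (x k + h) ⊆ Icc 0 1 := by
  have hplus := mem_unitCube_iff.1 hx.1 k
  have hminus := mem_unitCube_iff.1 hx.2 k
  simp only [update_self] at hplus hminus
  exact Icc_subset_Icc hminus.1 hplus.2

lemma update_update_of_ne {i k : Fin d} (hik : i ≠ k) (x : Fin d → ℝ) (c t : ℝ) :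
    update (update x i t) k (update x i t k + c) = update (update x k (x k + c)) i t := by
  rw [update_of_ne hik.symm, update_comm hik.symm]

lemma update_mem_diffDom {i k : Fin d} (hik : i ≠ k) {h : ℝ} {x : Fin d → ℝ}
    (hx : x ∈ diffDom d k h) {t : ℝ} (ht : t ∈ Icc (0:ℝ) 1) : update x i t ∈ diffDom d k h := by
  refine ⟨?_, ?_⟩
  · rw [update_update_of_ne hik]
    exact update_mem_unitCube hx.1 i ht
  · rw [sub_eq_add_neg, update_update_of_ne hik, ← sub_eq_add_neg]
    exact update_mem_unitCube hx.2 i ht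

lemma continuousOn_stencilRemainder {k : Fin d} {h : ℝ} (hh : 0 ≤ h)
    {w v : (Fin d → ℝ) → ℝ} (hw : ContinuousOn w (unitCube d)) (hv : ContinuousOn v (unitCube d)) :
    ContinuousOn (stencilRemainder d k h w v) (diffDom d k h) := by
  have hsub := diffDom_subset_unitCube (k := k) hh
  have hplus : ContinuousOn (fun x => v (update x k (x k + h))) (diffDom d k h) :=
    hv.comp (continuous_id.update k ((continuous_apply k).add continuous_const)).continuousOn
      fun x hx => hx.1
  have hminus : ContinuousOn (fun x => v (update x k (x k - h))) (diffDom d k h) :=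
    hv.comp (continuous_id.update k ((continuous_apply k).sub continuous_const)).continuousOn
      fun x hx => hx.2
  have hcentral : ContinuousOn (centralDiff d k h v) (diffDom d k h) :=
    (hplus.sub (continuousOn_const.mul (hv.mono hsub))).add hminus
  exact ((hw.mono hsub).sub (hcentral.div_const _)).div_const _

lemma hasDerivWithinAt_stencilRemainder {i k : Fin d} (hik : i ≠ k) {h : ℝ}
    {w w' v v' : (Fin d → ℝ) → ℝ}
    (hw : ∀ y ∈ unitCube d, HasDerivWithinAt (fun t => w (update y i t)) (w' y) (Icc 0 1) (y i))
    (hv : ∀ y ∈ unitCube d, HasDerivWithinAt (fun t => v (update y i t)) (v' y) (Icc 0 1) (y i))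
    (hh : 0 ≤ h) {x : Fin d → ℝ} (hx : x ∈ diffDom d k h) :
    HasDerivWithinAt (fun t => stencilRemainder d k h w v (update x i t))
      (stencilRemainder d k h w' v' x) (Icc 0 1) (x i) := by
  have hxc := diffDom_subset_unitCube hh hx
  have hplus := hv _ hx.1
  have hminus := hv _ hx.2
  simp only [update_of_ne hik] at hplus hminus
  have hfun : (fun t => stencilRemainder d k h w v (update x i t)) = fun t =>
      (w (update x i t) - (v (update (update x k (x k + h)) i t) - 2 * v (update x i t)
        + v (update (update x k (x k - h)) i t)) / h ^ 2) / h ^ 2 := by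
    funext t
    simp only [stencilRemainder, centralDiff, sub_eq_add_neg _ h, update_update_of_ne hik]
  rw [hfun]
  exact ((hw x hxc).sub (((hplus.sub ((hv x hxc).const_mul 2)).add hminus).div_const _)).div_const _

lemma abs_stencilRemainder_le {k : Fin d} {h M : ℝ} {f : ℕ → (Fin d → ℝ) → ℝ}
    (hf : ∀ m < 4, ∀ y ∈ unitCube d,
      HasDerivWithinAt (fun t => f m (update y k t)) (f (m + 1) y) (Icc 0 1) (y k))
    (hM : ∀ y ∈ unitCube d, |f 4 y| ≤ M) (hh : 0 < h) {x : Fin d → ℝ}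
    (hx : x ∈ diffDom d k h) : |stencilRemainder d k h (f 2) (f 0) x| ≤ M / 12 := by
  have hxc := diffDom_subset_unitCube hh.le hx
  have hsub := Icc_sub_add_subset_of_mem_diffDom hx
  have hmem : ∀ t ∈ Icc (x k - h) (x k + h), update x k t ∈ unitCube d := fun t ht =>
    update_mem_unitCube hxc k (hsub ht)
  have htaylor := abs_central_difference_sub_le (φ := fun m t => f m (update x k t)) hh.le
    (fun m hm t ht => by simpa using (hf m hm _ (hmem t ht)).mono hsub)
    (fun t ht => hM _ (hmem t ht))
  simp only [update_eq_self] at htaylor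
  have hrem : stencilRemainder d k h (f 2) (f 0) x
      = -(centralDiff d k h (f 0) x - h ^ 2 * f 2 x) / h ^ 4 := by
    unfold stencilRemainder
    field_simp
    ring
  rw [hrem, abs_div, abs_neg, abs_of_pos (pow_pos hh 4), div_le_div_iff₀ (pow_pos hh 4)
    (by norm_num)]
  unfold centralDiff
  linarith

end Stencil

namespace MixedContDiff

variable {d : ℕ} {u : (Fin d → ℝ) → ℝ} {k : Fin d} {h : ℝ}

lemma hasDerivWithinAt_stencilRemainder_mderiv (hu : MixedContDiff d 4 u) (hh : 0 ≤ h)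
    {β : Fin d → ℕ} (hβ : ∀ j, β j ≤ 4) (hβk : β k = 0) {i : Fin d} (hik : i ≠ k)
    (hβi : β i < 4) {x : Fin d → ℝ} (hx : x ∈ diffDom d k h) :
    HasDerivWithinAt (fun t =>
        stencilRemainder d k h (mderiv d (β + Pi.single k 2) u) (mderiv d β u) (update x i t))
      (stencilRemainder d k h (mderiv d (β + Pi.single i 1 + Pi.single k 2) u)
        (mderiv d (β + Pi.single i 1) u) x) (Icc 0 1) (x i) := by
  have hβ₂ : ∀ j, (β + Pi.single k 2 : Fin d → ℕ) j ≤ 4 := fun j => by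
    rcases eq_or_ne j k with rfl | hj
    · simp [hβk]
    · simpa [hj] using hβ j
  refine hasDerivWithinAt_stencilRemainder hik (fun y hy => ?_)
    (fun y hy => hu.hasDerivWithinAt_mderiv hβ hβi hy) hh hx
  rw [add_right_comm]
  exact hu.hasDerivWithinAt_mderiv hβ₂ (by simpa [hik] using hβi) hy

theorem hasDerivsOn_stencilRemainder_and_eqOn (hu : MixedContDiff d 4 u) (hh : 0 ≤ h)
    {α : Fin d → ℕ} (hα : ∀ j, α j ≤ 4) (hαk : α k = 0) :
    HasDerivsOn d α (stencilRemainder d k h (pd d k (pd d k u)) u) (diffDom d k h) ∧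
      EqOn (mderiv d α (stencilRemainder d k h (pd d k (pd d k u)) u))
        (stencilRemainder d k h (mderiv d (α + Pi.single k 2) u) (mderiv d α u))
        (diffDom d k h) := by
  have hupd : ∀ i, α i ≠ 0 → ∀ x ∈ diffDom d k h, ∀ t ∈ Icc (0:ℝ) 1,
      update x i t ∈ diffDom d k h := fun i hi x hx t ht =>
    update_mem_diffDom (by rintro rfl; exact hi hαk) hx ht
  have hF : ∀ β : Fin d → ℕ, (∀ j, β j ≤ α j) → ∀ i, β i < α i → ∀ x ∈ diffDom d k h,
      HasDerivWithinAt (fun t => stencilRemainder d k h (mderiv d (β + Pi.single k 2) u)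
          (mderiv d β u) (update x i t))
        (stencilRemainder d k h (mderiv d (β + Pi.single i 1 + Pi.single k 2) u)
          (mderiv d (β + Pi.single i 1) u) x) (Icc 0 1) (x i) := by
    intro β hβ i hi x hx
    have hik : i ≠ k := by rintro rfl; omega
    exact hu.hasDerivWithinAt_stencilRemainder_mderiv hh (fun j => (hβ j).trans (hα j))
      (by have := hβ k; omega) hik (hi.trans_le (hα i)) hx
  have hF₀ : EqOn (stencilRemainder d k h (pd d k (pd d k u)) u)
      (stencilRemainder d k h (mderiv d (0 + Pi.single k 2) u) (mderiv d 0 u)) (diffDom d k h) :=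
    fun x _ => by rw [zero_add, mderiv_single_two, mderiv_zero]
  have hmderiv := fun (β : Fin d → ℕ) (hβ : ∀ j, β j ≤ α j) =>
    eqOn_mderiv_of_hasDerivWithinAt (diffDom_subset_unitCube hh) hupd hF₀ hF hβ
  exact ⟨hasDerivsOn_of_hasDerivWithinAt hupd hF hmderiv, hmderiv α fun _ => le_rfl⟩

lemma abs_stencilRemainder_mderiv_le (hu : MixedContDiff d 4 u) {α : Fin d → ℕ}
    (hα : ∀ j, α j ≤ 4) (hαk : α k = 0) {K : ℝ}
    (hK : ∀ y ∈ unitCube d, |mderiv d (α + Pi.single k 4) u y| ≤ K) (hh : 0 < h)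
    {x : Fin d → ℝ} (hx : x ∈ diffDom d k h) :
    |stencilRemainder d k h (mderiv d (α + Pi.single k 2) u) (mderiv d α u) x| ≤ K / 12 := by
  have hαm : ∀ m ≤ 4, ∀ j, (α + Pi.single k m : Fin d → ℕ) j ≤ 4 := fun m hm j => by
    rcases eq_or_ne j k with rfl | hj
    · simpa [hαk] using hm
    · simpa [hj] using hα j
  have := abs_stencilRemainder_le (f := fun m => mderiv d (α + Pi.single k m) u)
    (fun m hm y hy => by
      rw [Pi.single_add, ← add_assoc]
      exact hu.hasDerivWithinAt_mderiv (hαm m hm.le) (by simpa [hαk] using hm) hy) hK hh hx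
  simpa using this

end MixedContDiff

theorem truncation_error_expansion_general (d : ℕ) (K : ℝ)
    (u : (Fin d → ℝ) → ℝ) (hu : MemXb d 4 K u) :
    ∃ τ : Fin d → ℝ → (Fin d → ℝ) → ℝ,
      (∀ k : Fin d, ∀ h ∈ Set.Ioc (0 : ℝ) 1,
        ContinuousOn (τ k h) (diffDom d k h) ∧
        (∀ x ∈ diffDom d k h,
          pd d k (pd d k u) x -
              (u (Function.update x k (x k + h)) - 2 * u x +
                  u (Function.update x k (x k - h))) / h ^ 2
            = h ^ 2 * τ k h x) ∧
        (∀ α : Fin d → ℕ, (∀ i, α i = 0 ∨ α i = 4) → α k = 0 →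
          HasDerivsOn d α (τ k h) (diffDom d k h) ∧
          ∀ x ∈ diffDom d k h, |mderiv d α (τ k h) x| ≤ K / 12)) ∧
      (∀ hv : Fin d → ℝ, (∀ k, hv k ∈ Set.Ioc (0 : ℝ) 1) →
        ∀ x : Fin d → ℝ, (∀ k, x ∈ diffDom d k (hv k)) →
          (∑ k, pd d k (pd d k u) x) -
              ∑ k, (u (Function.update x k (x k + hv k)) - 2 * u x +
                  u (Function.update x k (x k - hv k))) / hv k ^ 2
            = ∑ k, hv k ^ 2 * τ k (hv k) x) := by
  have hsmooth : MixedContDiff d 4 u := .of_memX hu.1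
  refine ⟨fun k h => stencilRemainder d k h (pd d k (pd d k u)) u, fun k h hh => ⟨?_,
    fun x _ => (sq_mul_stencilRemainder hh.1.ne' _ _ x).symm, fun α hα hαk => ?_⟩,
    fun hv hhv x _ => ?_⟩
  · have hu₀ : ContinuousOn u (unitCube d) := by
      simpa [mderiv_zero] using hsmooth.2 0 (by simp)
    have hu₂ : ContinuousOn (pd d k (pd d k u)) (unitCube d) := by
      rw [← mderiv_single_two]
      exact hsmooth.2 _ fun i => by rcases eq_or_ne i k with rfl | hi <;> simp [*]
    exact continuousOn_stencilRemainder hh.1.le hu₂ hu₀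
  · have hα₄ : ∀ i, α i ≤ 4 := fun i => by rcases hα i with h | h <;> omega
    obtain ⟨hderivs, heq⟩ := hsmooth.hasDerivsOn_stencilRemainder_and_eqOn hh.1.le hα₄ hαk
    refine ⟨hderivs, fun x hx => heq hx ▸ hsmooth.abs_stencilRemainder_mderiv_le hα₄ hαk
      (fun y hy => hu.2 _ (fun i => ?_) y hy) hh.1 hx⟩
    rcases eq_or_ne i k with rfl | hi <;> simp [*]
  · rw [← Finset.sum_sub_distrib]
    exact Finset.sum_congr rfl fun k _ => (sq_mul_stencilRemainder (hhv k).1.ne' _ _ x).symm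

/-- Truncation error expansion of the central difference stencil
(Lemma `consistency`, part 1) for `u ∈ X_4^d(K)`. -/
theorem truncation_error_expansion (d : ℕ) (hd : 1 ≤ d) (K : ℝ) (hK : 0 < K)
    (u : (Fin d → ℝ) → ℝ) (hu : MemXb d 4 K u) :
    ∃ τ : Fin d → ℝ → (Fin d → ℝ) → ℝ,
      (∀ k : Fin d, ∀ h ∈ Set.Ioc (0 : ℝ) 1,
        ContinuousOn (τ k h) (diffDom d k h) ∧
        (∀ x ∈ diffDom d k h,
          pd d k (pd d k u) x -
              (u (Function.update x k (x k + h)) - 2 * u x +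
                  u (Function.update x k (x k - h))) / h ^ 2
            = h ^ 2 * τ k h x) ∧
        (∀ α : Fin d → ℕ, (∀ i, α i = 0 ∨ α i = 4) → α k = 0 →
          HasDerivsOn d α (τ k h) (diffDom d k h) ∧
          ∀ x ∈ diffDom d k h, |mderiv d α (τ k h) x| ≤ K / 12)) ∧
      (∀ hv : Fin d → ℝ, (∀ k, hv k ∈ Set.Ioc (0 : ℝ) 1) →
        ∀ x : Fin d → ℝ, (∀ k, x ∈ diffDom d k (hv k)) →
          (∑ k, pd d k (pd d k u) x) -
              ∑ k, (u (Function.update x k (x k + hv k)) - 2 * u x +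
                  u (Function.update x k (x k - hv k))) / hv k ^ 2
            = ∑ k, hv k ^ 2 * τ k (hv k) x) :=
  truncation_error_expansion_general d K u hu
end

section
/- Let d ≥ 2, let p ≥ 1 be an integer, K ≥ 0, u ∈ ℝ and U : ℕ^d → ℝ, and assume the error expansion hypothesis: there are functions v_J, one for each nonempty J ⊆ {1,…,d}, assigning a real number to each tuple (i_j)_{j∈J} of nonnegative integers, with |v_J| ≤ K, such that u − U(i) = Σ_{∅≠J} v_J((i_j)_{j∈J}) · Π_{j∈J} 2^{−p i_j} for all i ∈ ℕ^d. With S(n) = Σ_{|i|_1 = n} U(i) and u_n = (δ^{d−1} S)(n) (δ the forward difference operator), for every n ∈ ℕ: |u − u_n| ≤ 2K · ((2^p+1)/2^{p−1})^{d−1} · (1 + (n+d−1)·(1+ln(d−1))/(d−1))^{d−1} · 2^{−pn}. -/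
/-- Forward difference operator: `(fdiff F) n = F (n+1) - F n`. -/
def fdiff (F : ℕ → ℝ) : ℕ → ℝ := fun n => F (n + 1) - F n

/-- The finite set of multi-indices `i ∈ ℕ^d` with `|i|₁ = l`. -/
def levelFinset (d l : ℕ) : Finset (Fin d → ℕ) :=
  (Fintype.piFinset fun _ : Fin d => Finset.range (l + 1)).filter (fun i => ∑ k, i k = l)

/-!
If `f` does not depend on the coordinate `j ∉ T`, its level sums over multi-indices supported in
`insert j T` are the partial sums of its level sums over `T`; so one forward difference deletes
the coordinate `j` and raises the level by one. For a term `v_J(i) ∏_{j ∈ J} x ^ i_j` of the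
error expansion (`x = 2⁻ᵖ`), the `d - |J|` differences in the directions outside `J` thus reduce
the `d`-dimensional level sums to `|J|`-dimensional ones, and the remaining `|J| - 1` differences
contribute binomial weights, which sum to `x ^ n (1 + x) ^ (|J| - 1)` times the size
`C(n + 2(d - 1), d - 1)` of the largest level set involved. The same reduction with `|J| = 1`
shows that the combination formula reproduces constants. Writing that binomial coefficient as
`∏ (1 + a / t)`, AM-GM and `H_k ≤ 1 + log k` give the logarithmic factor.
-/

open Finset Function

lemma fdiff_eq_fwdDiff : fdiff = fwdDiff 1 := rfl

lemma fdiff_iterate_sub (F G : ℕ → ℝ) (k : ℕ) :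
    fdiff^[k] (F - G) = fdiff^[k] F - fdiff^[k] G := by
  ext n
  simp only [fdiff_eq_fwdDiff, fwdDiff_iter_eq_sum_shift, Pi.sub_apply, smul_sub,
    sum_sub_distrib]

lemma fdiff_iterate_sum {α : Type*} (s : Finset α) (F : α → ℕ → ℝ) (k : ℕ) :
    fdiff^[k] (∑ a ∈ s, F a) = ∑ a ∈ s, fdiff^[k] (F a) :=
  fwdDiff_iter_finsetSum 1 s F k

lemma abs_fdiff_iterate_le (F : ℕ → ℝ) (k n : ℕ) :
    |fdiff^[k] F n| ≤ ∑ j ∈ range (k + 1), (k.choose j : ℝ) * |F (n + j)| := by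
  rw [fdiff_eq_fwdDiff, fwdDiff_iter_eq_sum_shift]
  refine (abs_sum_le_sum_abs _ _).trans (sum_le_sum fun j _ => ?_)
  simp [abs_mul]

section LevelSum

variable {ι : Type*} [DecidableEq ι]

noncomputable def levelSum (T : Finset ι) : ((ι → ℕ) → ℝ) →ₗ[ℝ] ℕ → ℝ where
  toFun f l := ∑ i ∈ T.piAntidiag l, f i
  map_add' f g := by ext l; simp [sum_add_distrib]
  map_smul' c f := by ext l; simp [mul_sum]

lemma levelSum_apply (T : Finset ι) (f : (ι → ℕ) → ℝ) (l : ℕ) :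
    levelSum T f l = ∑ i ∈ T.piAntidiag l, f i := rfl

lemma fdiff_levelSum_insert {T : Finset ι} {j : ι} (hj : j ∉ T) {f : (ι → ℕ) → ℝ}
    (hf : DependsOn f T) (l : ℕ) :
    fdiff (levelSum (insert j T) f) l = levelSum T f (l + 1) := by
  have hconv : ∀ m, levelSum (insert j T) f m = ∑ p ∈ antidiagonal m, levelSum T f p.2 := by
    intro m
    rw [levelSum_apply, ← cons_eq_insert _ _ hj, piAntidiag_cons hj, sum_disjiUnion]
    refine sum_congr rfl fun p _ => ?_
    rw [sum_map, levelSum_apply]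
    refine sum_congr rfl fun i _ => hf fun k hk => ?_
    simp [show k ≠ j by rintro rfl; exact hj hk]
  simp only [fdiff, hconv, Nat.sum_antidiagonal_succ, add_sub_cancel_right]

lemma fdiff_iterate_levelSum_union {J D : Finset ι} (hJD : Disjoint J D) {f : (ι → ℕ) → ℝ}
    (hf : DependsOn f J) (l : ℕ) :
    fdiff^[#D] (levelSum (J ∪ D) f) l = levelSum J f (l + #D) := by
  induction D using Finset.induction_on generalizing J l with
  | empty => simp
  | insert j D hjD ih =>
    have hjJ : j ∉ J := disjoint_right.1 hJD (mem_insert_self j D)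
    have hJD' : Disjoint (insert j J) D :=
      disjoint_insert_left.2 ⟨hjD, disjoint_of_subset_right (subset_insert j D) hJD⟩
    have ih' := funext (ih hJD' (hf.mono (by simp)))
    rw [card_insert_of_notMem hjD, iterate_succ_apply', union_insert, ← insert_union, ih',
      ← add_assoc, ← fdiff_levelSum_insert hjJ hf]
    simp only [fdiff, add_right_comm l 1]

lemma fdiff_iterate_levelSum_univ [Fintype ι] {J : Finset ι} (hJ : J.Nonempty)
    {f : (ι → ℕ) → ℝ} (hf : DependsOn f J) (n : ℕ) :
    fdiff^[Fintype.card ι - 1] (levelSum univ f) n =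
      fdiff^[#J - 1] (fun l => levelSum J f (l + #Jᶜ)) n := by
  have hsplit : Fintype.card ι - 1 = (#J - 1) + #Jᶜ := by
    have := hJ.card_pos
    have := card_le_univ J
    rw [card_compl]
    omega
  rw [hsplit, iterate_add_apply, ← union_compl J,
    funext (fdiff_iterate_levelSum_union disjoint_compl_right hf)]

lemma card_piAntidiag_singleton (j : ι) (t : ℕ) : #(({j} : Finset ι).piAntidiag t) = 1 := by
  refine card_eq_one.2 ⟨Pi.single j t, ?_⟩
  ext f
  simp only [mem_piAntidiag, sum_singleton, mem_singleton, funext_iff]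
  constructor
  · rintro ⟨rfl, hf⟩ k
    by_cases hk : k = j
    · subst hk; simp
    · simp [hk, not_imp_comm.1 (hf k) hk]
  · intro hf
    refine ⟨by simp [hf j], fun k hk => ?_⟩
    by_contra h
    exact hk (by simp [hf k, h])

lemma fdiff_iterate_levelSum_univ_const [Fintype ι] [Nonempty ι] (c : ℝ) (n : ℕ) :
    fdiff^[Fintype.card ι - 1] (levelSum univ fun _ : ι → ℕ => c) n = c := by
  obtain ⟨j⟩ := ‹Nonempty ι›
  rw [fdiff_iterate_levelSum_univ (singleton_nonempty j)
    ((dependsOn_const c).mono (Set.empty_subset _))]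
  simp [levelSum_apply, card_piAntidiag_singleton]

lemma sub_fdiff_iterate_levelSum_univ [Fintype ι] [Nonempty ι] {α : Type*} (S : Finset α)
    {u : ℝ} {U : (ι → ℕ) → ℝ} {E : α → (ι → ℕ) → ℝ}
    (hE : ∀ i, u - U i = ∑ a ∈ S, E a i) (n : ℕ) :
    u - fdiff^[Fintype.card ι - 1] (levelSum univ U) n =
      ∑ a ∈ S, fdiff^[Fintype.card ι - 1] (levelSum univ (E a)) n := by
  have hE' : (fun _ => u) - U = ∑ a ∈ S, E a := funext fun i => by simp [hE]
  conv_lhs => rw [← fdiff_iterate_levelSum_univ_const (ι := ι) u n]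
  rw [← Pi.sub_apply, ← fdiff_iterate_sub, ← map_sub, hE', map_sum, fdiff_iterate_sum,
    Finset.sum_apply]

lemma card_piAntidiag_univ [Fintype ι] (t : ℕ) :
    #((univ : Finset ι).piAntidiag t) = (Fintype.card ι + t - 1).choose t := by
  rw [← map_sym_eq_piAntidiag, card_map, sym_univ, card_univ, Sym.card_sym_eq_choose t]

lemma piAntidiag_subset_univ [Fintype ι] (J : Finset ι) (t : ℕ) :
    J.piAntidiag t ⊆ (univ : Finset ι).piAntidiag t := by
  intro f hf
  rw [mem_piAntidiag] at hf ⊢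
  refine ⟨?_, fun i _ => mem_univ i⟩
  rw [← hf.1]
  exact (sum_subset (subset_univ J) fun i _ hi => not_imp_comm.1 (hf.2 i) hi).symm

lemma abs_levelSum_le {J : Finset ι} {w : (ι → ℕ) → ℝ} {K x : ℝ} (hwK : ∀ i, |w i| ≤ K)
    (hx : 0 ≤ x) (t : ℕ) :
    |levelSum J (fun i => w i * ∏ j ∈ J, x ^ i j) t| ≤ #(J.piAntidiag t) * (K * x ^ t) := by
  rw [levelSum_apply, ← nsmul_eq_mul]
  refine (abs_sum_le_sum_abs _ _).trans (sum_le_card_nsmul _ _ _ fun i hi => ?_)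
  rw [prod_pow_eq_pow_sum, (mem_piAntidiag.1 hi).1, abs_mul, abs_of_nonneg (pow_nonneg hx t)]
  exact mul_le_mul_of_nonneg_right (hwK i) (pow_nonneg hx t)

lemma abs_fdiff_iterate_levelSum_le [Fintype ι] {J : Finset ι} (hJ : J.Nonempty)
    {w : (ι → ℕ) → ℝ} (hw : DependsOn w J) {K x : ℝ} (hwK : ∀ i, |w i| ≤ K) (hx0 : 0 ≤ x)
    (hx1 : x ≤ 1) (n : ℕ) :
    |fdiff^[Fintype.card ι - 1] (levelSum univ fun i => w i * ∏ j ∈ J, x ^ i j) n| ≤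
      K * (n + (Fintype.card ι - 1) + (Fintype.card ι - 1)).choose (Fintype.card ι - 1) *
        x ^ n * (1 + x) ^ (Fintype.card ι - 1) := by
  set d := Fintype.card ι
  set N := (n + (d - 1) + (d - 1)).choose (d - 1)
  have hK : 0 ≤ K := (abs_nonneg _).trans (hwK 0)
  have hJd : 1 ≤ #J ∧ #J ≤ d := ⟨hJ.card_pos, card_le_univ J⟩
  have hJc : #J - 1 + #Jᶜ = d - 1 := by
    rw [card_compl]
    omega
  have hf : DependsOn (fun i => w i * ∏ j ∈ J, x ^ i j) J := fun a b hab => by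
    dsimp only
    rw [hw hab, prod_congr rfl fun j hj => by rw [hab j hj]]
  have hcard : ∀ t ≤ n + (d - 1), (#(J.piAntidiag t) : ℝ) ≤ N := fun t ht => by
    have : (d + t - 1).choose t ≤ N := by
      rw [show d + t - 1 = t + (d - 1) by omega, Nat.choose_symm_add]
      exact Nat.choose_le_choose _ (by omega)
    exact_mod_cast ((card_le_card (piAntidiag_subset_univ J t)).trans_eq
      (card_piAntidiag_univ t)).trans this
  have hterm : ∀ m ∈ range (#J - 1 + 1), ((#J - 1).choose m : ℝ) *
      |levelSum J (fun i => w i * ∏ j ∈ J, x ^ i j) (n + m + #Jᶜ)| ≤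
        (#J - 1).choose m * (K * N * x ^ (n + m)) := fun m hm => by
    have hm : m ≤ #J - 1 := Nat.lt_succ_iff.1 (mem_range.1 hm)
    refine mul_le_mul_of_nonneg_left ((abs_levelSum_le hwK hx0 _).trans ?_) (Nat.cast_nonneg _)
    calc _ ≤ (N : ℝ) * (K * x ^ (n + m)) :=
          mul_le_mul (hcard _ (by omega))
            (mul_le_mul_of_nonneg_left (pow_le_pow_of_le_one hx0 hx1 (by omega)) hK)
            (by positivity) (Nat.cast_nonneg _)
      _ = _ := by ring
  rw [fdiff_iterate_levelSum_univ hJ hf]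
  calc _ ≤ _ := abs_fdiff_iterate_le _ _ _
    _ ≤ _ := sum_le_sum hterm
    _ = K * N * x ^ n * (1 + x) ^ (#J - 1) := by
      rw [add_comm 1 x, add_pow, mul_sum]
      exact sum_congr rfl fun m _ => by rw [one_pow, pow_add]; ring
    _ ≤ _ := by
      gcongr
      · linarith
      · omega

lemma abs_sub_fdiff_iterate_levelSum_univ_le [Fintype ι] [Nonempty ι] {u K x : ℝ}
    {U : (ι → ℕ) → ℝ} {v : Finset ι → (ι → ℕ) → ℝ} (hv : ∀ J, DependsOn (v J) J)
    (hvK : ∀ J i, |v J i| ≤ K) (hx0 : 0 ≤ x) (hx1 : x ≤ 1)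
    (hexp : ∀ i, u - U i = ∑ J ∈ univ.filter Finset.Nonempty, v J i * ∏ j ∈ J, x ^ i j)
    (n : ℕ) :
    |u - fdiff^[Fintype.card ι - 1] (levelSum univ U) n| ≤ 2 ^ Fintype.card ι *
      (K * (n + (Fintype.card ι - 1) + (Fintype.card ι - 1)).choose (Fintype.card ι - 1) *
        x ^ n * (1 + x) ^ (Fintype.card ι - 1)) := by
  have hK : 0 ≤ K := (abs_nonneg _).trans (hvK ∅ 0)
  rw [sub_fdiff_iterate_levelSum_univ _ hexp]
  calc _ ≤ _ := abs_sum_le_sum_abs _ _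
    _ ≤ _ := sum_le_card_nsmul _ _ _ fun J hJ =>
      abs_fdiff_iterate_levelSum_le (mem_filter.1 hJ).2 (hv J) (hvK J) hx0 hx1 n
    _ ≤ _ := by
      rw [nsmul_eq_mul]
      gcongr
      exact_mod_cast (card_filter_le _ _).trans_eq (by simp)

end LevelSum

lemma Nat.cast_add_choose_eq_prod (a k : ℕ) :
    ((a + k).choose k : ℝ) = ∏ t ∈ range k, (1 + a / (t + 1 : ℝ)) := by
  induction k with
  | zero => simp
  | succ k ih =>
    have h : ((a + k + 1 : ℕ) : ℝ) * (a + k).choose k =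
        (a + k + 1).choose (k + 1) * (k + 1 : ℕ) := by
      exact_mod_cast Nat.add_one_mul_choose_eq (a + k) k
    rw [prod_range_succ, ← ih, ← add_assoc]
    field_simp
    push_cast at h
    linear_combination -h

lemma Nat.cast_add_choose_le_pow_log (a k : ℕ) :
    ((a + k).choose k : ℝ) ≤ (1 + a * (1 + Real.log k) / k) ^ k := by
  rcases Nat.eq_zero_or_pos k with rfl | hk
  · simp
  set z : ℕ → ℝ := fun t => 1 + a / (t + 1 : ℝ)
  have hz : ∀ t ∈ range k, 0 ≤ z t := fun t _ => by positivity
  have hk' : (k : ℝ) ≠ 0 := by positivity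
  have hamgm : ∏ t ∈ range k, z t ^ (k⁻¹ : ℝ) ≤ 1 + a * harmonic k / k := by
    refine (Real.geom_mean_le_arith_mean_weighted _ (fun _ => (k : ℝ)⁻¹) z
      (fun _ _ => by positivity) (by simp [hk']) hz).trans_eq ?_
    simp only [z, ← mul_sum, sum_add_distrib, harmonic, div_eq_mul_inv, ← mul_sum]
    push_cast
    field_simp
    simp
  rw [Nat.cast_add_choose_eq_prod, ← Real.rpow_inv_natCast_pow (prod_nonneg hz) hk.ne',
    ← Real.finsetProd_rpow _ _ hz]
  gcongr
  exact hamgm.trans (by gcongr; exact harmonic_le_one_add_log k)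

lemma two_pow_add_one_div_two_pow_sub_one {p : ℕ} (hp : 1 ≤ p) :
    ((2 : ℝ) ^ p + 1) / 2 ^ (p - 1) = 2 * (1 + (1 / 2) ^ p) := by
  obtain ⟨q, rfl⟩ : ∃ q, p = q + 1 := ⟨p - 1, by omega⟩
  simp only [Nat.add_sub_cancel, one_div, inv_pow]
  field_simp
  ring

lemma levelFinset_eq_piAntidiag (d l : ℕ) : levelFinset d l = univ.piAntidiag l := by
  ext i
  simp only [levelFinset, mem_filter, Fintype.mem_piFinset, mem_range, mem_piAntidiag, mem_univ,
    implies_true, and_true]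
  refine ⟨And.right, fun h => ⟨fun k => ?_, h⟩⟩
  exact Nat.lt_succ_of_le (h ▸ single_le_sum (fun _ _ => Nat.zero_le _) (mem_univ k))

/-- Improved (logarithmic) error bound for the combination technique
(Corollary `supiAbsch`). -/
theorem combination_error_bound_improved (d p : ℕ) (hd : 2 ≤ d) (hp : 1 ≤ p)
    (K : ℝ) (hK : 0 ≤ K) (u : ℝ) (U : (Fin d → ℕ) → ℝ)
    (v : Finset (Fin d) → (Fin d → ℕ) → ℝ)
    (hdep : ∀ (J : Finset (Fin d)) (i i' : Fin d → ℕ),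
      (∀ j ∈ J, i j = i' j) → v J i = v J i')
    (hbound : ∀ (J : Finset (Fin d)) (i : Fin d → ℕ), |v J i| ≤ K)
    (hexp : ∀ i : Fin d → ℕ,
      u - U i = ∑ J ∈ Finset.univ.filter (fun J : Finset (Fin d) => J.Nonempty),
        v J i * ∏ j ∈ J, ((1 : ℝ) / 2) ^ (p * i j)) :
    ∀ n : ℕ,
      |u - fdiff^[d - 1] (fun l => ∑ i ∈ levelFinset d l, U i) n|
        ≤ 2 * K * (((2 : ℝ) ^ p + 1) / (2 : ℝ) ^ (p - 1)) ^ (d - 1) *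
            (1 + ((n : ℝ) + (d : ℝ) - 1) * (1 + Real.log ((d : ℝ) - 1)) / ((d : ℝ) - 1))
              ^ (d - 1) *
            ((1 : ℝ) / 2) ^ (p * n) := by
  intro n
  set x : ℝ := (1 / 2) ^ p
  set B := 1 + ((n : ℝ) + (d : ℝ) - 1) * (1 + Real.log ((d : ℝ) - 1)) / ((d : ℝ) - 1)
  have : Nonempty (Fin d) := ⟨⟨0, by omega⟩⟩
  have hbound' := abs_sub_fdiff_iterate_levelSum_univ_le (fun J a b => hdep J a b) hbound
    (by positivity : 0 ≤ x) (pow_le_one₀ (by norm_num) (by norm_num))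
    (fun i => (hexp i).trans (by simp only [x, pow_mul])) n
  have hN : ((n + (d - 1) + (d - 1)).choose (d - 1) : ℝ) ≤ B ^ (d - 1) := by
    convert Nat.cast_add_choose_le_pow_log (n + (d - 1)) (d - 1) using 3
    push_cast [Nat.cast_sub (by omega : 1 ≤ d)]
    ring
  have h2d : (2 : ℝ) ^ d = 2 * 2 ^ (d - 1) := by rw [← pow_succ', Nat.sub_add_cancel (by omega)]
  rw [Fintype.card_fin] at hbound'
  simp only [levelFinset_eq_piAntidiag, ← levelSum_apply]
  calc _ ≤ _ := hbound'
    _ ≤ 2 ^ d * (K * B ^ (d - 1) * x ^ n * (1 + x) ^ (d - 1)) := by gcongr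
    _ = _ := by
      rw [two_pow_add_one_div_two_pow_sub_one hp, pow_mul, h2d, mul_pow]
      ring
end
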